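/- arXiv:1705.07767 — 2 statements merged into one kernel-verified Lean document; each statement's English description precedes it below -/
import Mathlib

section
/- Let X be a nominal set, x ∈ X, and π a permutation. If π(a) = a for every a ∈ supp(x), then π • x = x. -/
/-- Atoms: pairs of a level (an integer) and an index (a natural number). -/
abbrev Atom : Type := ℤ × ℕ

/-- The level of an atom is its first component. -/
def level (a : Atom) : ℤ := a.1

/-- The group of finite, level-respecting permutations of atoms, as a
subgroup of the group of all bijections of `Atom`. -/
def APermSub : Subgroup (Equiv.Perm Atom) where
  carrier := {π | {a : Atom | π a ≠ a}.Finite ∧ ∀ a, level (π a) = level a}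
  one_mem' := ⟨Set.Finite.subset Set.finite_empty (fun _ ha => absurd rfl ha), fun _ => rfl⟩
  mul_mem' := by
    rintro π σ ⟨hπf, hπl⟩ ⟨hσf, hσl⟩
    refine ⟨(hπf.union hσf).subset ?_, fun a => ?_⟩
    · intro a ha
      rw [Set.mem_union]
      by_contra h
      push_neg at h
      simp only [Set.mem_setOf_eq, not_not] at h
      exact ha (by simp only [Set.mem_setOf_eq, Equiv.Perm.mul_apply, h.2, h.1, not_true] at *)
    · rw [Equiv.Perm.mul_apply, hπl, hσl]
  inv_mem' := by
    rintro π ⟨hf, hl⟩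
    refine ⟨hf.subset ?_, fun a => ?_⟩
    · intro a ha
      simp only [Set.mem_setOf_eq] at ha ⊢
      intro h
      apply ha
      conv_lhs => rw [← h]
      exact Equiv.symm_apply_apply π a
    · conv_rhs => rw [← Equiv.apply_symm_apply π a]
      exact (hl _).symm

/-- `A` supports `x` when every permutation fixing `A` pointwise fixes `x`. -/
def NSupports {X : Type*} [SMul APermSub X] (A : Set Atom) (x : X) : Prop :=
  ∀ π : APermSub, (∀ a ∈ A, (π : Equiv.Perm Atom) a = a) → π • x = x

/-- A set with a permutation action is nominal when every element has a
finite supporting set of atoms. -/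
def IsNominal (X : Type*) [SMul APermSub X] : Prop :=
  ∀ x : X, ∃ A : Set Atom, A.Finite ∧ NSupports A x

/-- The support of `x`: the intersection of all finite supporting sets. -/
def nsupp {X : Type*} [SMul APermSub X] (x : X) : Set Atom :=
  ⋂₀ {A : Set Atom | A.Finite ∧ NSupports A x}

/-!
Finite supports of `x` are closed under binary intersection. To remove an atom `b ∉ A` from a
finite support `B`, let `π` fix `B \ {b}` and swap `b` with an atom `c` of the same level that is
fresh for `A`, `B` and `π`. The swap fixes `A` pointwise, hence fixes `x`, and its conjugate of `π`
fixes `B` pointwise, hence also fixes `x`; so `π` fixes `x`. Removing the atoms of `B \ A` one at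
a time shows that `A ∩ B` supports `x`. A nonempty intersection-closed family of finite sets
contains its intersection (a member of least cardinality lies inside every other member), so
`nsupp x` is itself a finite support of `x`.
-/

lemma exists_notMem_level_eq {S : Set Atom} (hS : S.Finite) (ℓ : ℤ) :
    ∃ c, c ∉ S ∧ level c = ℓ := by
  have hinf : (Set.range fun n : ℕ => ((ℓ, n) : Atom)).Infinite :=
    Set.infinite_range_of_injective fun m n h => by simpa using h
  obtain ⟨_, ⟨n, rfl⟩, hn⟩ := hinf.exists_notMem_finite hS
  exact ⟨(ℓ, n), hn, rfl⟩

lemma swap_mem_APermSub {a b : Atom} (h : level a = level b) : Equiv.swap a b ∈ APermSub := by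
  refine ⟨(Set.toFinite {a, b}).subset fun c hc => ?_, fun c => ?_⟩
  · by_contra hab
    simp only [Set.mem_insert_iff, Set.mem_singleton_iff, not_or] at hab
    exact hc (Equiv.swap_apply_of_ne_of_ne hab.1 hab.2)
  · rcases eq_or_ne c a with rfl | hca
    · rw [Equiv.swap_apply_left, h]
    rcases eq_or_ne c b with rfl | hcb
    · rw [Equiv.swap_apply_right, h]
    · rw [Equiv.swap_apply_of_ne_of_ne hca hcb]

section Supports

variable {X : Type*} [MulAction APermSub X] {x : X} {A B : Set Atom}

lemma NSupports.diff_singleton (hA : A.Finite) (hB : B.Finite) (hAx : NSupports A x)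
    (hBx : NSupports B x) {b : Atom} (hb : b ∉ A) : NSupports (B \ {b}) x := by
  intro π hπ
  obtain ⟨c, hc, hlev⟩ :=
    exists_notMem_level_eq ((hA.union hB).union π.2.1) (level b)
  simp only [Set.mem_union, Set.mem_ofPred_eq, not_or, not_not] at hc
  obtain ⟨⟨hcA, hcB⟩, hπc⟩ := hc
  set τ : APermSub := ⟨Equiv.swap b c, swap_mem_APermSub hlev.symm⟩
  have hτx : τ • x = x := hAx τ fun a ha =>
    Equiv.swap_apply_of_ne_of_ne (ne_of_mem_of_not_mem ha hb) (ne_of_mem_of_not_mem ha hcA)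
  have hconj : (τ * π * τ) • x = x := hBx _ fun a ha => by
    by_cases hab : a = b
    · subst hab
      simp [τ, hπc]
    · have hac : a ≠ c := ne_of_mem_of_not_mem ha hcB
      simp [τ, Equiv.swap_apply_of_ne_of_ne hab hac, hπ a ⟨ha, hab⟩]
  have hττ : τ * τ = 1 := Subtype.ext (Equiv.swap_mul_self b c)
  calc π • x = (τ * (τ * π * τ) * τ) • x := by
        rw [← mul_assoc τ, ← mul_assoc τ, hττ, one_mul, mul_assoc, hττ, mul_one]
    _ = x := by rw [mul_smul, mul_smul, hτx, hconj, hτx]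

lemma NSupports.inter (hA : A.Finite) (hB : B.Finite) (hAx : NSupports A x)
    (hBx : NSupports B x) : NSupports (A ∩ B) x := by
  have : NSupports (B \ (B \ A)) x := by
    refine Set.Finite.induction_on_subset (motive := fun D _ => NSupports (B \ D) x) (B \ A)
      hB.sdiff (by simpa using hBx) ?_
    intro a D ha _ _ hD
    rw [Set.insert_eq, Set.union_comm, ← Set.sdiff_sdiff]
    exact NSupports.diff_singleton hA hB.sdiff hAx hD ha.2
  rwa [Set.sdiff_sdiff_right_self, Set.inter_comm] at this

end Supports

lemma Set.sInter_mem_of_inter_mem {α : Type*} {𝒮 : Set (Set α)} (hfin : ∀ A ∈ 𝒮, A.Finite)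
    (hne : 𝒮.Nonempty) (hinter : ∀ A ∈ 𝒮, ∀ B ∈ 𝒮, A ∩ B ∈ 𝒮) : ⋂₀ 𝒮 ∈ 𝒮 := by
  obtain ⟨C, hC, hmin⟩ := exists_minimalFor_of_wellFoundedLT (· ∈ 𝒮) Set.ncard hne
  suffices ⋂₀ 𝒮 = C by rwa [this]
  refine (Set.sInter_subset_of_mem hC).antisymm (Set.subset_sInter fun A hA => ?_)
  have hCA : C ∩ A = C := Set.eq_of_subset_of_ncard_le Set.inter_subset_left
    (hmin (hinter C hC A hA) (Set.ncard_inter_le_ncard_left C A (hfin C hC))) (hfin C hC)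
  exact hCA ▸ Set.inter_subset_right

theorem IsNominal.nsupports_nsupp {X : Type*} [MulAction APermSub X] (hX : IsNominal X) (x : X) :
    NSupports (nsupp x) x :=
  (Set.sInter_mem_of_inter_mem (fun _ hA => hA.1) (hX x)
    fun _ hA _ hB => ⟨hA.1.inter_of_left _, hA.2.inter hA.1 hB.1 hB.2⟩).2

/-- If a permutation fixes every atom in the support of `x`, then it fixes `x`. -/
theorem smul_eq_self_of_fix_supp {X : Type*} [MulAction APermSub X]
    (hX : IsNominal X) (x : X) (π : APermSub)
    (h : ∀ a ∈ nsupp x, (π : Equiv.Perm Atom) a = a) :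
    π • x = x :=
  hX.nsupports_nsupp x π h
end

section
/- Let X be a nominal set, x ∈ X, and a an atom. Then a # x if and only if there exists an atom b distinct from a with level(b) = level(a) such that b # x and (b a) • x = x. -/
/-- The swapping `(a b)` of two atoms of equal level, as a permutation. -/
def nswap (a b : Atom) (h : level a = level b) : APermSub :=
  ⟨Equiv.swap a b, by
    constructor
    · apply ((Set.finite_singleton b).insert a).subset
      intro c hc
      by_contra hcc
      simp only [Set.mem_insert_iff, Set.mem_singleton_iff, not_or] at hcc
      exact hc (Equiv.swap_apply_of_ne_of_ne hcc.1 hcc.2)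
    · intro c
      rcases eq_or_ne c a with rfl | hca
      · rw [Equiv.swap_apply_left]; exact h.symm
      rcases eq_or_ne c b with rfl | hcb
      · rw [Equiv.swap_apply_right]; exact h
      · rw [Equiv.swap_apply_of_ne_of_ne hca hcb]⟩


/-! A fresh atom is one avoided by some finite supporting set `A`. For `→`, any atom `b` of the
level of `a` outside `A ∪ {a}` works, since `(b a)` fixes `A` pointwise. For `←`, equivariance
makes `(b a) '' A` a support of `(b a) • x = x`, and it avoids `a` because `A` avoids `b`. -/

lemma notMem_nsupp_iff {X : Type*} [SMul APermSub X] {x : X} {a : Atom} :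
    a ∉ nsupp x ↔ ∃ A : Set Atom, A.Finite ∧ NSupports A x ∧ a ∉ A := by
  simp only [nsupp, Set.mem_sInter, Set.mem_ofPred_eq, not_forall, exists_prop, and_assoc]

lemma exists_level_eq_notMem {A : Set Atom} (hA : A.Finite) (l : ℤ) :
    ∃ b : Atom, level b = l ∧ b ∉ A := by
  obtain ⟨n, hn⟩ := (hA.image Prod.snd).exists_notMem
  exact ⟨(l, n), rfl, fun h => hn ⟨_, h, rfl⟩⟩

@[simp]
lemma coe_nswap (a b : Atom) (h : level a = level b) :
    ((nswap a b h : APermSub) : Equiv.Perm Atom) = Equiv.swap a b :=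
  rfl

lemma NSupports.nswap_smul_eq {X : Type*} [SMul APermSub X] {A : Set Atom} {x : X}
    (hA : NSupports A x) {a b : Atom} (h : level a = level b) (ha : a ∉ A) (hb : b ∉ A) :
    nswap a b h • x = x :=
  hA _ fun _ hc => Equiv.swap_apply_of_ne_of_ne (ne_of_mem_of_not_mem hc ha)
    (ne_of_mem_of_not_mem hc hb)

lemma NSupports.smul {X : Type*} [MulAction APermSub X] {A : Set Atom} {x : X}
    (hA : NSupports A x) (σ : APermSub) :
    NSupports ((σ : Equiv.Perm Atom) '' A) (σ • x) := by
  intro π hπ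
  have hconj : (σ⁻¹ * π * σ) • x = x := hA _ fun _ hc => by
    simp [hπ _ (Set.mem_image_of_mem _ hc)]
  calc π • σ • x = σ • (σ⁻¹ * π * σ) • x := by
        simp only [smul_smul, mul_assoc, mul_inv_cancel_left]
    _ = σ • x := by rw [hconj]

theorem fresh_iff_exists_fresh_swap_general {X : Type*} [MulAction APermSub X]
    (x : X) (a : Atom) :
    a ∉ nsupp x ↔
      ∃ (b : Atom) (h : level b = level a),
        b ≠ a ∧ b ∉ nsupp x ∧ nswap b a h • x = x := by
  constructor
  · intro ha
    obtain ⟨A, hA, hAx, haA⟩ := notMem_nsupp_iff.1 ha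
    obtain ⟨b, hb, hbaA⟩ := exists_level_eq_notMem (hA.insert a) (level a)
    obtain ⟨hba, hbA⟩ := not_or.1 hbaA
    exact ⟨b, hb, hba, notMem_nsupp_iff.2 ⟨A, hA, hAx, hbA⟩, hAx.nswap_smul_eq hb hbA haA⟩
  · rintro ⟨b, h, -, hb, hswap⟩
    obtain ⟨A, hA, hAx, hbA⟩ := notMem_nsupp_iff.1 hb
    have hσA := hAx.smul (nswap b a h)
    rw [hswap] at hσA
    refine notMem_nsupp_iff.2 ⟨_, hA.image _, hσA, ?_⟩
    rwa [coe_nswap, Set.mem_image_equiv, Equiv.symm_swap, Equiv.swap_apply_right]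

/-- `a` is fresh for `x` iff some atom `b ≠ a` of the same level is fresh for `x`
and the swapping `(b a)` fixes `x`. -/
theorem fresh_iff_exists_fresh_swap {X : Type*} [MulAction APermSub X]
    (hX : IsNominal X) (x : X) (a : Atom) :
    a ∉ nsupp x ↔
      ∃ (b : Atom) (h : level b = level a),
        b ≠ a ∧ b ∉ nsupp x ∧ nswap b a h • x = x :=
  fresh_iff_exists_fresh_swap_general x a
end
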